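/- Let G be symmetric positive semidefinite, λ_FSD ≥ 0, λ_WSD > 0, and g ∈ R^m. Define q(P) = -g^T P g + (λ_FSD/2) g^T P^T G P g + (λ_WSD/2) g^T P^T P g over m×m matrices P. Then q is a convex function of P, and P* = (λ_FSD·G + λ_WSD·I)^{-1} is a global minimizer of E[q(P)] whenever g is random with arbitrary distribution (with finite second moments). -/

import Mathlib

open Matrix MeasureTheory
open scoped Matrix

/-!
With `A = λ_FSD G + λ_WSD I`, which is positive definite, the meta-objective is
`q g P = -⟪g, P g⟫ + ½ ⟪P g, A (P g)⟫`: a convex quadratic function of `w = P g` (since `A` is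
positive semidefinite) composed with the linear map `P ↦ P g`, hence convex in `P`. Completing the
square gives `q g P = q g A⁻¹ + ½ ⟪P g - A⁻¹ g, A (P g - A⁻¹ g)⟫`, so `A⁻¹` minimizes `q g` for every
`g`, and integrating this pointwise inequality gives the claim for the expectation.
-/

lemma Matrix.PosSemidef.isSymm {n : Type*} {A : Matrix n n ℝ} (hA : A.PosSemidef) :
    A.IsSymm :=
  isHermitian_iff_isSymm.mp hA.isHermitian

section Quadratic

variable {n : Type*} [Fintype n]

/-- The meta-objective is `q g P = quadObjective (λ_FSD • G + λ_WSD • 1) g (P *ᵥ g)`. -/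
noncomputable def quadObjective (A : Matrix n n ℝ) (c w : n → ℝ) : ℝ :=
  -(c ⬝ᵥ w) + (1 / 2) * (w ⬝ᵥ A *ᵥ w)

lemma Matrix.IsSymm.dotProduct_mulVec_comm {A : Matrix n n ℝ} (hA : A.IsSymm) (x y : n → ℝ) :
    x ⬝ᵥ A *ᵥ y = y ⬝ᵥ A *ᵥ x := by
  rw [dotProduct_mulVec, ← mulVec_transpose, hA.eq, dotProduct_comm]

lemma Matrix.IsSymm.dotProduct_mulVec_sub_self {A : Matrix n n ℝ} (hA : A.IsSymm)
    (x y : n → ℝ) :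
    (x - y) ⬝ᵥ A *ᵥ (x - y) = x ⬝ᵥ A *ᵥ x - 2 * (x ⬝ᵥ A *ᵥ y) + y ⬝ᵥ A *ᵥ y := by
  rw [mulVec_sub, sub_dotProduct, dotProduct_sub, dotProduct_sub, hA.dotProduct_mulVec_comm y x]
  ring

lemma Matrix.IsSymm.dotProduct_mulVec_smul_add_smul {A : Matrix n n ℝ} (hA : A.IsSymm)
    (x y : n → ℝ) (a b : ℝ) :
    (a • x + b • y) ⬝ᵥ A *ᵥ (a • x + b • y) =
      a ^ 2 * (x ⬝ᵥ A *ᵥ x) + 2 * (a * b) * (x ⬝ᵥ A *ᵥ y) + b ^ 2 * (y ⬝ᵥ A *ᵥ y) := by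
  simp only [mulVec_add, mulVec_smul, add_dotProduct, dotProduct_add, smul_dotProduct,
    dotProduct_smul, smul_eq_mul, hA.dotProduct_mulVec_comm y x]
  ring

lemma Matrix.PosSemidef.convexOn_dotProduct_mulVec_self {A : Matrix n n ℝ} (hA : A.PosSemidef) :
    ConvexOn ℝ Set.univ fun w ↦ w ⬝ᵥ A *ᵥ w := by
  refine ⟨convex_univ, fun x _ y _ a b ha hb hab ↦ ?_⟩
  have hxy : 0 ≤ x ⬝ᵥ A *ᵥ x - 2 * (x ⬝ᵥ A *ᵥ y) + y ⬝ᵥ A *ᵥ y := by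
    simpa only [star_trivial, hA.isSymm.dotProduct_mulVec_sub_self] using
      hA.dotProduct_mulVec_nonneg (x - y)
  simp only [smul_eq_mul, hA.isSymm.dotProduct_mulVec_smul_add_smul]
  linear_combination (a * b) * hxy + (a * (x ⬝ᵥ A *ᵥ x) + b * (y ⬝ᵥ A *ᵥ y)) * hab

lemma Matrix.PosSemidef.convexOn_quadObjective {A : Matrix n n ℝ} (hA : A.PosSemidef)
    (c : n → ℝ) : ConvexOn ℝ Set.univ (quadObjective A c) :=
  (-(dotProductBilin ℝ ℝ c)).convexOn convex_univ
    |>.add (hA.convexOn_dotProduct_mulVec_self.smul (by norm_num : (0 : ℝ) ≤ 1 / 2))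

lemma Matrix.PosSemidef.convexOn_quadObjective_mulVec {A : Matrix n n ℝ} (hA : A.PosSemidef)
    (c v : n → ℝ) : ConvexOn ℝ Set.univ fun P : Matrix n n ℝ ↦ quadObjective A c (P *ᵥ v) :=
  (hA.convexOn_quadObjective c).comp_linearMap ((mulVecBilin ℝ ℝ).flip v)

lemma Matrix.IsSymm.quadObjective_eq_add {A : Matrix n n ℝ} (hA : A.IsSymm) {c w₀ : n → ℝ}
    (hw₀ : A *ᵥ w₀ = c) (w : n → ℝ) :
    quadObjective A c w = quadObjective A c w₀ + (1 / 2) * ((w - w₀) ⬝ᵥ A *ᵥ (w - w₀)) := by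
  subst hw₀
  simp only [quadObjective, hA.dotProduct_mulVec_sub_self, dotProduct_comm (A *ᵥ w₀),
    hA.dotProduct_mulVec_comm w w₀]
  ring

lemma Matrix.PosDef.quadObjective_inv_mulVec_le [DecidableEq n] {A : Matrix n n ℝ}
    (hA : A.PosDef) (c w : n → ℝ) : quadObjective A c (A⁻¹ *ᵥ c) ≤ quadObjective A c w := by
  have hsol : A *ᵥ (A⁻¹ *ᵥ c) = c := by
    rw [mulVec_mulVec, mul_nonsing_inv _ (A.isUnit_iff_isUnit_det.mp hA.isUnit), one_mulVec]
  rw [hA.posSemidef.isSymm.quadObjective_eq_add hsol w]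
  have hsq := hA.posSemidef.dotProduct_mulVec_nonneg (w - A⁻¹ *ᵥ c)
  rw [star_trivial] at hsq
  linarith

lemma Matrix.dotProduct_transpose_mul_mul_mulVec (R M : Matrix n n ℝ) (v : n → ℝ) :
    v ⬝ᵥ (Rᵀ * M * R) *ᵥ v = (R *ᵥ v) ⬝ᵥ M *ᵥ (R *ᵥ v) := by
  rw [← mulVec_mulVec, ← mulVec_mulVec, dotProduct_mulVec, vecMul_transpose]

lemma quadObjective_mulVec (A R : Matrix n n ℝ) (v : n → ℝ) :
    quadObjective A v (R *ᵥ v) = v ⬝ᵥ ((1 / 2 : ℝ) • (Rᵀ * A * R) - R) *ᵥ v := by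
  rw [sub_mulVec, smul_mulVec, dotProduct_sub, dotProduct_smul, smul_eq_mul,
    dotProduct_transpose_mul_mul_mulVec, quadObjective]
  ring

lemma integrable_dotProduct_mulVec_self {Ω : Type*} [MeasurableSpace Ω] {μ : Measure Ω}
    {g : Ω → n → ℝ} (hg : ∀ i j, Integrable (fun ω ↦ g ω i * g ω j) μ) (M : Matrix n n ℝ) :
    Integrable (fun ω ↦ g ω ⬝ᵥ M *ᵥ g ω) μ := by
  simp only [dotProduct, mulVec, Finset.mul_sum]
  refine integrable_finsetSum _ fun i _ ↦ integrable_finsetSum _ fun j _ ↦ ?_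
  simpa only [mul_left_comm] using (hg i j).const_mul (M i j)

lemma integrable_quadObjective_mulVec {Ω : Type*} [MeasurableSpace Ω] {μ : Measure Ω}
    {g : Ω → n → ℝ} (hg : ∀ i j, Integrable (fun ω ↦ g ω i * g ω j) μ) (A R : Matrix n n ℝ) :
    Integrable (fun ω ↦ quadObjective A (g ω) (R *ᵥ g ω)) μ := by
  simpa only [quadObjective_mulVec] using integrable_dotProduct_mulVec_self hg _

end Quadratic

theorem apo_meta_objective_convex_and_global_min_general
    (m : ℕ) (G : Matrix (Fin m) (Fin m) ℝ) (hG : G.PosSemidef)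
    (lamF lamW : ℝ) (hlamF : 0 ≤ lamF) (hlamW : 0 < lamW)
    (q : (Fin m → ℝ) → Matrix (Fin m) (Fin m) ℝ → ℝ)
    (hq : ∀ (g : Fin m → ℝ) (P : Matrix (Fin m) (Fin m) ℝ),
      q g P = -(g ⬝ᵥ P.mulVec g) + (lamF / 2) * (g ⬝ᵥ (Pᵀ * G * P).mulVec g)
        + (lamW / 2) * (g ⬝ᵥ (Pᵀ * P).mulVec g))
    {Ω : Type*} [MeasurableSpace Ω] (μ : Measure Ω)
    (g : Ω → Fin m → ℝ)
    (hInt : ∀ i j, Integrable (fun ω => g ω i * g ω j) μ) :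
    (∀ gv : Fin m → ℝ, ConvexOn ℝ Set.univ (q gv)) ∧
      ∀ P : Matrix (Fin m) (Fin m) ℝ,
        (∫ ω, q (g ω) ((lamF • G + lamW • (1 : Matrix (Fin m) (Fin m) ℝ))⁻¹) ∂μ)
          ≤ ∫ ω, q (g ω) P ∂μ := by
  set A := lamF • G + lamW • (1 : Matrix (Fin m) (Fin m) ℝ)
  have hA : A.PosDef := PosDef.posSemidef_add (hG.smul hlamF) (PosDef.one.smul hlamW)
  have hqA : ∀ v P, q v P = quadObjective A v (P *ᵥ v) := fun v P ↦ by
    have hPP : v ⬝ᵥ (Pᵀ * P) *ᵥ v = (P *ᵥ v) ⬝ᵥ (P *ᵥ v) := by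
      simpa using dotProduct_transpose_mul_mul_mulVec P 1 v
    rw [hq, hPP, dotProduct_transpose_mul_mul_mulVec, quadObjective, add_mulVec, smul_mulVec,
      smul_mulVec, one_mulVec, dotProduct_add, dotProduct_smul, dotProduct_smul, smul_eq_mul,
      smul_eq_mul]
    ring
  obtain rfl : q = fun v P ↦ quadObjective A v (P *ᵥ v) := funext₂ hqA
  refine ⟨fun v ↦ hA.posSemidef.convexOn_quadObjective_mulVec v v, fun P ↦ ?_⟩
  exact integral_mono (integrable_quadObjective_mulVec hInt A _)
    (integrable_quadObjective_mulVec hInt A P) fun ω ↦ hA.quadObjective_inv_mulVec_le _ _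

/-- Convexity of the approximate APO meta-objective in the preconditioner, and
global optimality of `P* = (λ_FSD G + λ_WSD I)⁻¹` for its expectation. -/
theorem apo_meta_objective_convex_and_global_min
    (m : ℕ) (G : Matrix (Fin m) (Fin m) ℝ) (hG : G.PosSemidef)
    (lamF lamW : ℝ) (hlamF : 0 ≤ lamF) (hlamW : 0 < lamW)
    (q : (Fin m → ℝ) → Matrix (Fin m) (Fin m) ℝ → ℝ)
    (hq : ∀ (g : Fin m → ℝ) (P : Matrix (Fin m) (Fin m) ℝ),
      q g P = -(g ⬝ᵥ P.mulVec g) + (lamF / 2) * (g ⬝ᵥ (Pᵀ * G * P).mulVec g)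
        + (lamW / 2) * (g ⬝ᵥ (Pᵀ * P).mulVec g))
    {Ω : Type*} [MeasurableSpace Ω] (μ : Measure Ω) [IsProbabilityMeasure μ]
    (g : Ω → Fin m → ℝ)
    (hInt : ∀ i j, Integrable (fun ω => g ω i * g ω j) μ) :
    (∀ gv : Fin m → ℝ, ConvexOn ℝ Set.univ (q gv)) ∧
      ∀ P : Matrix (Fin m) (Fin m) ℝ,
        (∫ ω, q (g ω) ((lamF • G + lamW • (1 : Matrix (Fin m) (Fin m) ℝ))⁻¹) ∂μ)
          ≤ ∫ ω, q (g ω) P ∂μ :=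
  apo_meta_objective_convex_and_global_min_general m G hG lamF lamW hlamF hlamW q hq μ g hInt
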